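/- arXiv:2204.10021 — 2 statements merged into one kernel-verified Lean document; each statement's English description precedes it below -/
import Mathlib

section
/- If G is a cyclically 4-edge-connected cubic graph and G' is obtained from G by an (αβ:γδ)_{uv}-reduction at an edge uv (deleting u and v and adding edges αβ and γδ), then G' is bridgeless. -/
/-!
A bridge `xy` of `G'` is also a bridge of `G - u - v`, which therefore splits into sides
`C ∋ x` and `D ∋ y` joined by no edge of `G` other than `xy`. Neither side is a single vertex:
it would be adjacent to `u`, `v` and `x`, putting `uv` in a triangle. One side, say `D`,
receives at most two of the four edges leaving `{u, v}`, so the cut between `C ∪ {u, v}` and `D`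
has at most three edges. In a cubic graph, a set of at least two vertices left by at most three
edges spans a circuit: all its vertices but one have two neighbours inside, while an acyclic
graph has two distinct leaves, the ends of a longest path. This contradicts cyclic
4-edge-connectivity.
-/

namespace SimpleGraph

variable {V : Type*} {G : SimpleGraph V}

def edgeCut (G : SimpleGraph V) (S : Set V) : Set (Sym2 V) :=
  {e ∈ G.edgeSet | ∃ a b : V, e = s(a, b) ∧ a ∈ S ∧ b ∉ S}

lemma edgeCut_compl (S : Set V) : G.edgeCut Sᶜ = G.edgeCut S := by
  ext e
  constructor
  · rintro ⟨he, a, b, rfl, ha, hb⟩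
    exact ⟨he, b, a, Sym2.eq_swap, not_not.mp hb, ha⟩
  · rintro ⟨he, a, b, rfl, ha, hb⟩
    exact ⟨he, b, a, Sym2.eq_swap, hb, not_not.mpr ha⟩

lemma ncard_neighborSet_sdiff_add_ncard_neighborSet_sdiff_le [Finite V] {S : Set V} {x x' : V}
    (hx : x ∈ S) (hx' : x' ∈ S) (hne : x ≠ x') :
    (G.neighborSet x \ S).ncard + (G.neighborSet x' \ S).ncard ≤ (G.edgeCut S).ncard := by
  have hcut : ∀ z ∈ S, (fun w => s(z, w)) '' (G.neighborSet z \ S) ⊆ G.edgeCut S := by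
    rintro z hz _ ⟨w, ⟨hw, hwS⟩, rfl⟩
    exact ⟨hw, z, w, rfl, hz, hwS⟩
  have hdisj : Disjoint ((fun w => s(x, w)) '' (G.neighborSet x \ S))
      ((fun w => s(x', w)) '' (G.neighborSet x' \ S)) := by
    rw [Set.disjoint_left]
    rintro _ ⟨w, ⟨-, hwS⟩, rfl⟩ ⟨w', ⟨-, hw'S⟩, hEq⟩
    rcases Sym2.eq_iff.mp hEq with ⟨h, -⟩ | ⟨-, rfl⟩
    exacts [hne h.symm, hw'S hx]
  rw [← Set.ncard_image_of_injective _ fun _ _ => Sym2.congr_right.mp,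
    ← Set.ncard_image_of_injective (G.neighborSet x' \ S) fun _ _ => Sym2.congr_right.mp,
    ← Set.ncard_union_eq hdisj]
  exact Set.ncard_le_ncard (Set.union_subset (hcut x hx) (hcut x' hx'))

lemma IsAcyclic.neighborSet_subset_of_forall_length_le (hG : G.IsAcyclic) {u v : V}
    {p : G.Walk u v} (hp : p.IsPath)
    (hmax : ∀ (u' v' : V) (p' : G.Walk u' v'), p'.IsPath → p'.length ≤ p.length) :
    G.neighborSet u ⊆ {p.snd} := by
  intro w hw
  by_cases hwp : w ∈ p.support
  · exact hG.eq_snd_of_adj_start hp hw hwp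
  · have := hmax w v (.cons (G.adj_symm hw) p) (hp.cons hwp)
    simp at this

lemma not_isAcyclic_of_forall_ne_two_le_ncard_neighborSet [Finite V] {b y : V} (hy : y ≠ b)
    (hdeg : ∀ x ≠ b, 2 ≤ (G.neighborSet x).ncard) : ¬ G.IsAcyclic := by
  intro hG
  have : Nonempty V := ⟨y⟩
  obtain ⟨u, v, p, hp, hmax⟩ := Walk.exists_isPath_forall_isPath_length_le_length G
  have hleaf : ∀ {s t : V} (q : G.Walk s t), q.IsPath → q.length = p.length →
      (G.neighborSet s).ncard ≤ 1 := fun q hq hlen =>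
    (Set.ncard_le_ncard (hG.neighborSet_subset_of_forall_length_le hq
      (hlen ▸ hmax))).trans (Set.ncard_singleton _).le
  obtain ⟨z, hz⟩ := Set.nonempty_of_ncard_ne_zero (s := G.neighborSet y)
    (by have := hdeg y hy; omega)
  have hlen : 1 ≤ p.length := hmax y z _ (Path.singleton hz).2
  have huv : u ≠ v := hp.nil_iff_eq.not.mp (Walk.not_nil_iff_lt_length.mpr hlen)
  rcases eq_or_ne u b with rfl | hub
  · have := hdeg v huv.symm
    have := hleaf p.reverse hp.reverse (Walk.length_reverse p)
    omega
  · have := hdeg u hub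
    have := hleaf p hp rfl
    omega

lemma ncard_neighborSet_sdiff_le [Finite V] {a b : V} {S : Set V} (hab : G.Adj a b)
    (hb : b ∈ S) : (G.neighborSet a \ S).ncard ≤ (G.neighborSet a).ncard - 1 :=
  (Set.ncard_le_ncard (Set.sdiff_subset_sdiff_right (Set.singleton_subset_iff.mpr hb))).trans
    (Set.ncard_sdiff_singleton_of_mem hab).le

lemma ncard_neighborSet_induce (T : Set V) (x : T) :
    ((G.induce T).neighborSet x).ncard = (G.neighborSet x ∩ T).ncard := by
  rw [neighborSet_induce, ← Set.ncard_image_of_injective _ Subtype.val_injective,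
    Subtype.image_preimage_coe, Set.inter_comm]

lemma not_isAcyclic_induce_of_ncard_edgeCut_le_three [Finite V]
    (hdeg : ∀ w, 3 ≤ (G.neighborSet w).ncard) {T : Set V} (hT : 2 ≤ T.ncard)
    (hcut : (G.edgeCut T).ncard ≤ 3) : ¬ (G.induce T).IsAcyclic := by
  -- at most one vertex of `T` sends two edges out of `T`; every other one has two inside
  obtain ⟨b, hbT, hb⟩ : ∃ b ∈ T, ∀ x ∈ T, x ≠ b → (G.neighborSet x \ T).ncard ≤ 1 := by
    by_cases hex : ∃ b ∈ T, 2 ≤ (G.neighborSet b \ T).ncard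
    · obtain ⟨b, hbT, hb⟩ := hex
      refine ⟨b, hbT, fun x hx hxb => ?_⟩
      have := G.ncard_neighborSet_sdiff_add_ncard_neighborSet_sdiff_le hx hbT hxb
      omega
    · push Not at hex
      obtain ⟨t, htT⟩ := Set.nonempty_of_ncard_ne_zero (s := T) (by omega)
      exact ⟨t, htT, fun x hx _ => Nat.le_of_lt_succ (hex x hx)⟩
  obtain ⟨y, hyT, hyb⟩ := Set.exists_ne_of_one_lt_ncard hT b
  refine not_isAcyclic_of_forall_ne_two_le_ncard_neighborSet (b := ⟨b, hbT⟩) (y := ⟨y, hyT⟩)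
    (by simpa using hyb) fun x hxb => ?_
  have hx := hb x x.2 (by simpa [Subtype.ext_iff] using hxb)
  have := Set.ncard_inter_add_ncard_sdiff_eq_ncard (G.neighborSet x) T
  have := hdeg x
  rw [ncard_neighborSet_induce]
  omega

lemma four_le_ncard_edgeCut [Finite V] (hdeg : ∀ w, 3 ≤ (G.neighborSet w).ncard)
    (hcyc4 : ∀ S : Set V, ¬ (G.induce S).IsAcyclic → ¬ (G.induce Sᶜ).IsAcyclic →
      4 ≤ (G.edgeCut S).ncard)
    {S : Set V} (hS : 2 ≤ S.ncard) (hSc : 2 ≤ Sᶜ.ncard) : 4 ≤ (G.edgeCut S).ncard := by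
  by_contra! hcut
  refine hcyc4 S ?_ ?_ |>.not_gt hcut
  · exact not_isAcyclic_induce_of_ncard_edgeCut_le_three hdeg hS (by omega)
  · exact not_isAcyclic_induce_of_ncard_edgeCut_le_three hdeg hSc (by rw [edgeCut_compl]; omega)

lemma IsBridge.exists_forall_adj_eq {x y : V} (h : G.IsBridge s(x, y)) :
    ∃ D : Set V, x ∉ D ∧ y ∈ D ∧ ∀ a b, G.Adj a b → a ∉ D → b ∈ D → s(a, b) = s(x, y) := by
  refine ⟨{w | (G.deleteEdges {s(x, y)}).Reachable y w}, fun hx => h hx.symm, .refl y,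
    fun a b hab ha hb => ?_⟩
  by_contra hne
  exact ha <| hb.trans <| Adj.reachable <| (deleteEdges_adj).mpr
    ⟨hab.symm, by rwa [Set.mem_singleton_iff, Sym2.eq_swap]⟩

structure IsBridgePartition (G : SimpleGraph V) (u v x y : V) (C D : Set V) : Prop where
  mem_left : x ∈ C
  mem_right : y ∈ D
  disjoint : Disjoint C D
  union_eq : C ∪ D = {u, v}ᶜ
  adj_eq : ∀ a ∈ C, ∀ b ∈ D, G.Adj a b → s(a, b) = s(x, y)

lemma exists_isBridgePartition_of_isBridge_induce {u v : V} {x y : ↥({u, v}ᶜ : Set V)}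
    (h : (G.induce {u, v}ᶜ).IsBridge s(x, y)) :
    ∃ C D, G.IsBridgePartition u v ↑x ↑y C D := by
  obtain ⟨D, hx, hy, hcross⟩ := h.exists_forall_adj_eq
  refine ⟨(↑) '' Dᶜ, (↑) '' D, ⟨x, hx, rfl⟩, ⟨y, hy, rfl⟩,
    (Set.disjoint_image_iff Subtype.val_injective).mpr disjoint_compl_left, ?_, ?_⟩
  · rw [← Set.image_union, Set.compl_union_self, Set.image_univ, Subtype.range_coe]
  · rintro _ ⟨a, ha, rfl⟩ _ ⟨b, hb, rfl⟩ hab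
    simpa using congrArg (Sym2.map Subtype.val) (hcross a b hab ha hb)

namespace IsBridgePartition

variable {u v x y : V} {C D : Set V}

lemma symm (h : G.IsBridgePartition u v x y C D) : G.IsBridgePartition u v y x D C := by
  obtain ⟨hx, hy, hdisj, hunion, hcross⟩ := h
  refine ⟨hy, hx, hdisj.symm, Set.union_comm C D ▸ hunion, fun a ha b hb hab => ?_⟩
  rw [Sym2.eq_swap, hcross b hb a ha hab.symm, Sym2.eq_swap]

lemma compl_union_pair (h : G.IsBridgePartition u v x y C D) : (C ∪ {u, v})ᶜ = D := by
  ext w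
  have hw := Set.ext_iff.mp h.union_eq w
  have hCD : w ∈ C → w ∉ D := fun hC => Set.disjoint_left.mp h.disjoint hC
  simp only [Set.mem_union, Set.mem_compl_iff, Set.mem_insert_iff, Set.mem_singleton_iff] at hw ⊢
  tauto

lemma ncard_neighborSet_inter_add_ncard_neighborSet_inter [Finite V]
    (h : G.IsBridgePartition u v x y C D) (z : V) :
    (G.neighborSet z ∩ C).ncard + (G.neighborSet z ∩ D).ncard =
      (G.neighborSet z \ {u, v}).ncard := by
  rw [← Set.ncard_union_eq (h.disjoint.mono Set.inter_subset_right Set.inter_subset_right),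
    ← Set.inter_union_distrib_left, h.union_eq, Set.sdiff_eq]

lemma ncard_edgeCut_union_pair_le [Finite V] (h : G.IsBridgePartition u v x y C D) :
    (G.edgeCut (C ∪ {u, v})).ncard ≤
      (G.neighborSet u ∩ D).ncard + (G.neighborSet v ∩ D).ncard + 1 := by
  have hsub : G.edgeCut (C ∪ {u, v}) ⊆ insert s(x, y) ((fun w => s(u, w)) '' (G.neighborSet u ∩ D) ∪
      (fun w => s(v, w)) '' (G.neighborSet v ∩ D)) := by
    rintro _ ⟨hab, a, b, rfl, ha, hb⟩
    have hbD : b ∈ D := h.compl_union_pair ▸ hb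
    rcases ha with haC | rfl | rfl
    · exact Or.inl (h.adj_eq a haC b hbD hab)
    · exact Or.inr (Or.inl ⟨b, ⟨hab, hbD⟩, rfl⟩)
    · exact Or.inr (Or.inr ⟨b, ⟨hab, hbD⟩, rfl⟩)
  calc (G.edgeCut (C ∪ {u, v})).ncard
      ≤ (((fun w => s(u, w)) '' (G.neighborSet u ∩ D) ∪
          (fun w => s(v, w)) '' (G.neighborSet v ∩ D))).ncard + 1 :=
        (Set.ncard_le_ncard hsub).trans (Set.ncard_insert_le _ _)
    _ ≤ (G.neighborSet u ∩ D).ncard + (G.neighborSet v ∩ D).ncard + 1 := by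
        grw [Set.ncard_union_le, Set.ncard_image_le, Set.ncard_image_le]

lemma two_le_ncard_right [Finite V] (hdeg : ∀ w, 3 ≤ (G.neighborSet w).ncard)
    (htri : ∀ z, G.Adj u z → ¬ G.Adj v z) (h : G.IsBridgePartition u v x y C D) :
    2 ≤ D.ncard := by
  obtain ⟨-, hy, -, hunion, hcross⟩ := h
  by_contra! hD
  have hN : G.neighborSet y ⊆ {u, v, x} := by
    intro w hw
    by_cases hwuv : w = u ∨ w = v
    · rcases hwuv with rfl | rfl <;> simp
    · have hw' : w ∈ C ∪ D := hunion ▸ by simpa using hwuv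
      rcases hw' with hwC | hwD
      · simp [Sym2.congr_left.mp (hcross w hwC y hy (G.adj_symm hw))]
      · exact absurd ((Set.ncard_le_one_iff).mp (by omega) hwD hy) (G.ne_of_adj hw).symm
  have hle : ({u, v, x} : Set V).ncard ≤ 3 := by
    grw [Set.ncard_insert_le, Set.ncard_insert_le, Set.ncard_singleton]
  have hN3 : G.neighborSet y = {u, v, x} :=
    Set.eq_of_subset_of_ncard_le hN (hle.trans (hdeg y))
  have hyu : G.Adj y u := by simp [← mem_neighborSet, hN3]
  have hyv : G.Adj y v := by simp [← mem_neighborSet, hN3]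
  exact htri y hyu.symm hyv.symm

lemma two_lt_ncard_neighborSet_inter_add [Finite V]
    (hdeg : ∀ w, 3 ≤ (G.neighborSet w).ncard)
    (hcyc4 : ∀ S : Set V, ¬ (G.induce S).IsAcyclic → ¬ (G.induce Sᶜ).IsAcyclic →
      4 ≤ (G.edgeCut S).ncard)
    (huv : u ≠ v) (htri : ∀ z, G.Adj u z → ¬ G.Adj v z) (h : G.IsBridgePartition u v x y C D) :
    2 < (G.neighborSet u ∩ D).ncard + (G.neighborSet v ∩ D).ncard := by
  have hcut := G.four_le_ncard_edgeCut hdeg hcyc4 (S := C ∪ {u, v})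
    ((Set.ncard_pair huv).ge.trans (Set.ncard_le_ncard Set.subset_union_right))
    (h.compl_union_pair ▸ h.two_le_ncard_right hdeg htri)
  have := h.ncard_edgeCut_union_pair_le
  omega

end IsBridgePartition

end SimpleGraph

open SimpleGraph

theorem reduction_of_cyclically_four_connected_is_bridgeless_general {V : Type*} [Fintype V]
    (G : SimpleGraph V)
    (hcubic : ∀ w : V, (G.neighborSet w).ncard = 3)
    (hcyc4 : ∀ S : Set V, ¬ (G.induce S).IsAcyclic → ¬ (G.induce Sᶜ).IsAcyclic →
      4 ≤ ({e ∈ G.edgeSet | ∃ a b : V, e = s(a, b) ∧ a ∈ S ∧ b ∉ S}).ncard)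
    (u v α β γ δ : V) (huv : G.Adj u v)
    (hNu : G.neighborSet u = {v, α, γ}) (hNv : G.neighborSet v = {u, β, δ})
    (hαβ : α ≠ β) (hαδ : α ≠ δ) (hβγ : β ≠ γ) (hγδ : γ ≠ δ)
    (hαS : α ∈ ({u, v}ᶜ : Set V)) (hβS : β ∈ ({u, v}ᶜ : Set V))
    (hγS : γ ∈ ({u, v}ᶜ : Set V)) (hδS : δ ∈ ({u, v}ᶜ : Set V)) :
    ∀ e : Sym2 ↥({u, v}ᶜ : Set V),
      ¬ (G.induce ({u, v}ᶜ : Set V) ⊔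
          fromEdgeSet {s((⟨α, hαS⟩ : ↥({u, v}ᶜ : Set V)), ⟨β, hβS⟩),
                       s((⟨γ, hγS⟩ : ↥({u, v}ᶜ : Set V)), ⟨δ, hδS⟩)}).IsBridge e := by
  have hdeg : ∀ w, 3 ≤ (G.neighborSet w).ncard := fun w => (hcubic w).ge
  have htri : ∀ z, G.Adj u z → ¬ G.Adj v z := by
    intro z hzu hzv
    rw [← mem_neighborSet, hNu] at hzu
    rw [← mem_neighborSet, hNv] at hzv
    simp only [Set.mem_compl_iff, Set.mem_insert_iff, Set.mem_singleton_iff, not_or]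
      at hzu hzv hαS hγS
    rcases hzu with rfl | rfl | rfl <;> rcases hzv with h | h | h <;> simp_all
  intro e
  induction e using Sym2.ind with
  | h x y =>
    intro hbr
    obtain ⟨C, D, hCD⟩ := exists_isBridgePartition_of_isBridge_induce (hbr.anti le_sup_left)
    have hD := hCD.two_lt_ncard_neighborSet_inter_add hdeg hcyc4 huv.ne htri
    have hC := hCD.symm.two_lt_ncard_neighborSet_inter_add hdeg hcyc4 huv.ne htri
    have hu := hCD.ncard_neighborSet_inter_add_ncard_neighborSet_inter u
    have hv := hCD.ncard_neighborSet_inter_add_ncard_neighborSet_inter v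
    have hu' := ncard_neighborSet_sdiff_le (S := {u, v}) huv (by simp)
    have hv' := ncard_neighborSet_sdiff_le (S := {u, v}) huv.symm (by simp)
    rw [hcubic] at hu' hv'
    omega

/-- If `G` is a cyclically 4-edge-connected cubic graph (every edge-cut leaving a circuit
on both sides has at least 4 edges) and `G'` is obtained from `G` by an
`(αβ:γδ)_{uv}`-reduction — deleting the adjacent vertices `u, v`, where `α, γ` are the
other neighbours of `u` and `β, δ` the other neighbours of `v`, and adding the edges
`αβ` and `γδ` — then `G'` is bridgeless. -/
theorem reduction_of_cyclically_four_connected_is_bridgeless {V : Type*} [Fintype V]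
    (G : SimpleGraph V)
    (hcubic : ∀ w : V, (G.neighborSet w).ncard = 3)
    (hcyc4 : ∀ S : Set V, ¬ (G.induce S).IsAcyclic → ¬ (G.induce Sᶜ).IsAcyclic →
      4 ≤ ({e ∈ G.edgeSet | ∃ a b : V, e = s(a, b) ∧ a ∈ S ∧ b ∉ S}).ncard)
    (u v α β γ δ : V) (huv : G.Adj u v)
    (hNu : G.neighborSet u = {v, α, γ}) (hNv : G.neighborSet v = {u, β, δ})
    (hαβ : α ≠ β) (hαγ : α ≠ γ) (hαδ : α ≠ δ) (hβγ : β ≠ γ) (hβδ : β ≠ δ) (hγδ : γ ≠ δ)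
    (hαS : α ∈ ({u, v}ᶜ : Set V)) (hβS : β ∈ ({u, v}ᶜ : Set V))
    (hγS : γ ∈ ({u, v}ᶜ : Set V)) (hδS : δ ∈ ({u, v}ᶜ : Set V)) :
    ∀ e : Sym2 ↥({u, v}ᶜ : Set V),
      ¬ (G.induce ({u, v}ᶜ : Set V) ⊔
          fromEdgeSet {s((⟨α, hαS⟩ : ↥({u, v}ᶜ : Set V)), ⟨β, hβS⟩),
                       s((⟨γ, hγS⟩ : ↥({u, v}ᶜ : Set V)), ⟨δ, hδS⟩)}).IsBridge e :=
  reduction_of_cyclically_four_connected_is_bridgeless_general G hcubic hcyc4 u v α β γ δ huv hNu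
    hNv hαβ hαδ hβγ hγδ hαS hβS hγS hδS
end

section
/- Let P be the Petersen graph and let P' be the cubic graph on 30 vertices obtained by expanding each vertex of P into a triangle. Let N be the perfect matching of P' consisting of the edges corresponding to the edges of P. Then N cannot be extended to three perfect matchings M₁ = N, M₂, M₃ of P' with M₁ ∩ M₂ ∩ M₃ = ∅. -/
open SimpleGraph

/-- `M` is (the edge set of) a perfect matching of `G`. -/
def IsPMSet {V : Type*} (G : SimpleGraph V) (M : Set (Sym2 V)) : Prop :=
  M ⊆ G.edgeSet ∧ ∀ v : V, ∃! e : Sym2 V, e ∈ M ∧ v ∈ e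

/-- The Petersen graph: vertices are the 2-element subsets of a 5-element set,
adjacent when disjoint (the Kneser graph `K(5,2)`). -/
def Petersen : SimpleGraph {s : Finset (Fin 5) // s.card = 2} :=
  SimpleGraph.fromRel (fun a b => Disjoint a.val b.val)

/-- The vertex set of the graph `P'` obtained from the Petersen graph by expanding every
vertex into a triangle: the darts of the Petersen graph, i.e. a vertex `(v, w)` is the
copy of `v` incident with the former edge `vw`. -/
abbrev PetersenDart : Type :=
  {p : {s : Finset (Fin 5) // s.card = 2} × {s : Finset (Fin 5) // s.card = 2} //
    Petersen.Adj p.1 p.2}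

/-- The graph `P'` obtained from the Petersen graph by expanding every vertex into a
triangle: the three darts at a common vertex form a triangle, and the two darts of each
former edge are joined by an edge. -/
def PetersenTriangles : SimpleGraph PetersenDart :=
  SimpleGraph.fromRel (fun x y =>
    x.val.1 = y.val.1 ∨ (x.val.1 = y.val.2 ∧ x.val.2 = y.val.1))

/-- The set `N` of edges of `P'` corresponding to the edges of the Petersen graph. -/
def PetersenMatching : Set (Sym2 PetersenDart) :=
  {e | ∃ x y : PetersenDart, e = s(x, y) ∧ x.val.1 = y.val.2 ∧ x.val.2 = y.val.1}

set_option maxRecDepth 40000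

abbrev PV := {s : Finset (Fin 5) // s.card = 2}

instance : DecidableRel Petersen.Adj := fun a b =>
  decidable_of_iff' _ (SimpleGraph.fromRel_adj _ a b)

lemma petersen_ne {a b : PV} (h : Petersen.Adj a b) : a ≠ b :=
  ((SimpleGraph.fromRel_adj _ a b).1 h).1

def cross (M : Set (Sym2 PetersenDart)) (a b : PV) : Prop :=
  ∃ x y : PetersenDart, x.val = (a, b) ∧ y.val = (b, a) ∧ s(x, y) ∈ M

lemma cross_symm (M : Set (Sym2 PetersenDart)) (a b : PV) :
    cross M a b ↔ cross M b a := by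
  constructor <;> rintro ⟨x, y, hx, hy, h⟩ <;> exact ⟨y, x, hy, hx, Sym2.eq_swap ▸ h⟩

lemma pm_unique {V : Type*} {G : SimpleGraph V} {M : Set (Sym2 V)}
    (hM : IsPMSet G M) {v : V} {e e' : Sym2 V} (he : e ∈ M) (hv : v ∈ e)
    (he' : e' ∈ M) (hv' : v ∈ e') : e = e' := by
  obtain ⟨f, _, hu⟩ := hM.2 v
  rw [hu e ⟨he, hv⟩, hu e' ⟨he', hv'⟩]

/-- abbreviation for darts at `a` -/
def da (a b : PV) (h : Petersen.Adj a b) : PetersenDart := ⟨(a, b), h⟩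

lemma da_inj {a b a' b' : PV} {h h'} (hd : da a b h = da a' b' h') : a = a' ∧ b = b' := by
  have := congrArg Subtype.val hd
  simp only [da, Prod.mk.injEq] at this
  exact this

lemma not_cross_partner (M : Set (Sym2 PetersenDart)) (hM : IsPMSet PetersenTriangles M)
    (a b : PV) (hb : Petersen.Adj a b) (hnc : ¬ cross M a b) :
    ∃ (c : PV) (hc : Petersen.Adj a c), c ≠ b ∧ s(da a b hb, da a c hc) ∈ M := by
  obtain ⟨e, ⟨heM, hve⟩, _⟩ := hM.2 (da a b hb)
  set w := Sym2.Mem.other hve with hw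
  have hsp : s(da a b hb, w) = e := Sym2.other_spec hve
  have hadj : PetersenTriangles.Adj (da a b hb) w := by
    have := hM.1 heM
    rw [← hsp, SimpleGraph.mem_edgeSet] at this
    exact this
  rw [PetersenTriangles, SimpleGraph.fromRel_adj] at hadj
  obtain ⟨hne, hrel⟩ := hadj
  have hcr : w.val = (b, a) → False := by
    intro hwval
    exact hnc ⟨da a b hb, w, rfl, hwval, hsp ▸ heM⟩
  have hmain : w.val.1 = a → ∃ (c : PV) (hc : Petersen.Adj a c), c ≠ b ∧
      s(da a b hb, da a c hc) ∈ M := by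
    intro hwa
    have hc : Petersen.Adj a w.val.2 := hwa ▸ w.property
    refine ⟨w.val.2, hc, ?_, ?_⟩
    · intro hcb
      apply hne
      apply Subtype.ext
      exact (Prod.ext hwa hcb).symm
    · have hweq : w = da a w.val.2 hc :=
        Subtype.ext (show w.val = (a, w.val.2) from Prod.ext hwa rfl)
      rw [← hweq]
      exact hsp ▸ heM
  rcases hrel with (h | ⟨h1, h2⟩) | (h | ⟨h1, h2⟩)
  · exact hmain h.symm
  · exact absurd (Prod.ext h2.symm h1.symm) fun hh => hcr hh
  · exact hmain h
  · exact absurd (Prod.ext h1 h2) fun hh => hcr hh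

lemma cross_excl (M : Set (Sym2 PetersenDart)) (hM : IsPMSet PetersenTriangles M)
    (a b c : PV) (hb : Petersen.Adj a b) (hc : Petersen.Adj a c)
    (hm : s(da a b hb, da a c hc) ∈ M) : ¬ cross M a c := by
  rintro ⟨x, y, hx, hy, hxy⟩
  have hxc : x = da a c hc := Subtype.ext hx
  rw [hxc] at hxy
  have heq := pm_unique hM (v := da a c hc) hm (Sym2.mem_mk_right _ _) hxy
    (Sym2.mem_mk_left _ _)
  rw [Sym2.eq_iff] at heq
  rcases heq with ⟨_, h2⟩ | ⟨h1, _⟩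
  · rw [← h2] at hy
    simp only [da, Prod.mk.injEq] at hy
    exact petersen_ne hc hy.1
  · rw [← h1] at hy
    simp only [da, Prod.mk.injEq] at hy
    exact petersen_ne hc hy.1

lemma inner_unique (M : Set (Sym2 PetersenDart)) (hM : IsPMSet PetersenTriangles M)
    (a u v w : PV) (hu : Petersen.Adj a u) (hv : Petersen.Adj a v) (hw : Petersen.Adj a w)
    (h1 : s(da a u hu, da a v hv) ∈ M) (h2 : s(da a w hw, da a u hu) ∈ M)
    (hwv : w ≠ v) (hwu : w ≠ u) : False := by
  have heq := pm_unique hM (v := da a u hu) h1 (Sym2.mem_mk_left _ _) h2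
    (Sym2.mem_mk_right _ _)
  rw [Sym2.eq_iff] at heq
  rcases heq with ⟨hA, _⟩ | ⟨_, hB⟩
  · exact hwu (da_inj hA.symm).2
  · exact hwv (da_inj hB).2.symm

lemma triangleOdd (M : Set (Sym2 PetersenDart)) (hM : IsPMSet PetersenTriangles M)
    (a b1 b2 b3 : PV)
    (h1 : Petersen.Adj a b1) (h2 : Petersen.Adj a b2) (h3 : Petersen.Adj a b3)
    (h12 : b1 ≠ b2) (h13 : b1 ≠ b3) (h23 : b2 ≠ b3)
    (hnb : ∀ w, Petersen.Adj a w → w = b1 ∨ w = b2 ∨ w = b3) :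
    (cross M a b1 ↔ (cross M a b2 ↔ cross M a b3)) := by
  have two_cross : ∀ (x y z : PV), Petersen.Adj a x → Petersen.Adj a y →
      (hz : Petersen.Adj a z) → (∀ w, Petersen.Adj a w → w = x ∨ w = y ∨ w = z) →
      cross M a x → cross M a y → ¬ cross M a z → False := by
    intro x y z hx hy hz hnb' cx cy cz
    obtain ⟨c, hc, hcb, hm⟩ := not_cross_partner M hM a z hz cz
    rcases hnb' c hc with rfl | rfl | rfl
    · exact (cross_excl M hM a z c hz hc hm) cx
    · exact (cross_excl M hM a z c hz hc hm) cy
    · exact hcb rfl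
  have zero_cross : ¬ cross M a b1 → ¬ cross M a b2 → ¬ cross M a b3 → False := by
    intro c1 c2 c3
    obtain ⟨c, hc, hcb1, hm1⟩ := not_cross_partner M hM a b1 h1 c1
    rcases hnb c hc with h | h | h
    · exact hcb1 h
    · rw [show da a c hc = da a b2 h2 from Subtype.ext (by simp [da, h])] at hm1
      obtain ⟨c', hc', hcb3, hm3⟩ := not_cross_partner M hM a b3 h3 c3
      rcases hnb c' hc' with h' | h' | h'
      · rw [show da a c' hc' = da a b1 h1 from Subtype.ext (by simp [da, h'])] at hm3
        exact inner_unique M hM a b1 b2 b3 h1 h2 h3 hm1 hm3 h23.symm h13.symm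
      · rw [show da a c' hc' = da a b2 h2 from Subtype.ext (by simp [da, h'])] at hm3
        exact inner_unique M hM a b2 b1 b3 h2 h1 h3 (Sym2.eq_swap ▸ hm1) hm3 h13.symm h23.symm
      · exact hcb3 h'
    · rw [show da a c hc = da a b3 h3 from Subtype.ext (by simp [da, h])] at hm1
      obtain ⟨c', hc', hcb2, hm2⟩ := not_cross_partner M hM a b2 h2 c2
      rcases hnb c' hc' with h' | h' | h'
      · rw [show da a c' hc' = da a b1 h1 from Subtype.ext (by simp [da, h'])] at hm2
        exact inner_unique M hM a b1 b3 b2 h1 h3 h2 hm1 hm2 h23 h12.symm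
      · exact hcb2 h'
      · rw [show da a c' hc' = da a b3 h3 from Subtype.ext (by simp [da, h'])] at hm2
        exact inner_unique M hM a b3 b1 b2 h3 h1 h2 (Sym2.eq_swap ▸ hm1) hm2 h12.symm h23
  by_cases c1 : cross M a b1 <;> by_cases c2 : cross M a b2 <;> by_cases c3 : cross M a b3
  · tauto
  · exact (two_cross b1 b2 b3 h1 h2 h3 hnb c1 c2 c3).elim
  · exact (two_cross b1 b3 b2 h1 h3 h2 (fun w hw => by rcases hnb w hw with h|h|h <;> tauto) c1 c3 c2).elim
  · tauto
  · exact (two_cross b2 b3 b1 h2 h3 h1 (fun w hw => by rcases hnb w hw with h|h|h <;> tauto) c2 c3 c1).elim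
  · tauto
  · tauto
  · exact (zero_cross c1 c2 c3).elim

/-- Part A -/
lemma partA : IsPMSet PetersenTriangles PetersenMatching := by
  constructor
  · rintro e ⟨x, y, rfl, h1, h2⟩
    rw [SimpleGraph.mem_edgeSet, PetersenTriangles, SimpleGraph.fromRel_adj]
    refine ⟨?_, Or.inl (Or.inr ⟨h1, h2⟩)⟩
    intro hxy
    exact petersen_ne x.property (by rw [hxy] at h1 ⊢; rw [← h2, hxy])
  · intro v
    refine ⟨s(v, ⟨(v.val.2, v.val.1), v.property.symm⟩), ⟨⟨v, _, rfl, rfl, rfl⟩, by simp⟩, ?_⟩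
    rintro e ⟨⟨x, y, rfl, h1, h2⟩, hv⟩
    rw [Sym2.mem_iff] at hv
    rcases hv with rfl | rfl
    · have hy : y = (⟨(v.val.2, v.val.1), v.property.symm⟩ : PetersenDart) :=
        Subtype.ext (Prod.ext h2.symm h1.symm)
      rw [hy]
    · have hx : x = (⟨(v.val.2, v.val.1), v.property.symm⟩ : PetersenDart) :=
        Subtype.ext (Prod.ext h1 h2)
      rw [hx, Sym2.eq_swap]

def mkN : ℕ → (ℕ → Bool) → ℕ
  | 0, _ => 0
  | n+1, f => Nat.bit (f 0) (mkN n (fun i => f (i+1)))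

lemma mkN_testBit : ∀ (n : ℕ) (f : ℕ → Bool) (k : ℕ), k < n → (mkN n f).testBit k = f k := by
  intro n
  induction n with
  | zero => intro f k hk; omega
  | succ m ih =>
    intro f k hk
    cases k with
    | zero => exact Nat.testBit_bit_zero _ _
    | succ j =>
      rw [mkN, Nat.testBit_bit_succ]
      exact ih _ j (by omega)

lemma mkN_lt : ∀ (n : ℕ) (f : ℕ → Bool), mkN n f < 2 ^ n := by
  intro n
  induction n with
  | zero => intro f; simp [mkN]
  | succ m ih =>
    intro f
    have := ih (fun i => f (i + 1))
    rw [mkN, Nat.bit]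
    cases f 0 <;> simp only [cond] <;> rw [pow_succ] <;> omega

lemma boolIff {p q r : Prop} [Decidable p] [Decidable q] [Decidable r]
    (h : p ↔ (q ↔ r)) : (decide p == (decide q == decide r)) = true := by
  by_cases p <;> by_cases q <;> by_cases r <;> simp_all

def tripleL : List (ℕ × ℕ × ℕ) :=
  [(0,1,2),(3,4,5),(6,7,8),(9,10,11),(6,9,12),(3,10,13),(4,7,14),(0,11,14),(1,8,13),(2,5,12)]

def isOddB (n : ℕ) : Bool :=
  tripleL.all fun t => n.testBit t.1 == (n.testBit t.2.1 == n.testBit t.2.2)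

def L64 : List ℕ :=
  [655, 825, 1111, 1505, 2170, 2508, 3746, 3860, 4735, 5065, 5287, 5393, 6282, 6460, 7762,
   8164, 8865, 8983, 9337, 9679, 10324, 10722, 11916, 12090, 12881, 13287, 13449, 13631,
   14500, 14610, 15996, 16330, 17082, 17164, 17506, 17876, 18511, 18937, 20119, 20257,
   21066, 21500, 21650, 21796, 22719, 22793, 24167, 24529, 25236, 25378, 25676, 26106,
   26721, 27095, 28345, 28431, 29284, 29650, 29884, 29962, 30865, 31015, 32329, 32767]

set_option maxRecDepth 10000 in
set_option maxHeartbeats 4000000 in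
lemma key1' : ∀ a < 256, ∀ b < 128, isOddB (128 * a + b) = true → (128 * a + b) ∈ L64 := by
  decide

lemma key1 : ∀ n < 32768, isOddB n = true → n ∈ L64 := by
  intro n hn h
  obtain ⟨a, b, ha, hb, rfl⟩ : ∃ a b, a < 256 ∧ b < 128 ∧ n = 128 * a + b :=
    ⟨n / 128, n % 128, by omega, by omega, by omega⟩
  exact key1' a ha b hb h

lemma key2 : ∀ n ∈ L64, ∀ k ∈ L64, n &&& k ≠ 0 := by decide

def V01 : PV := ⟨{0, 1}, by decide⟩
def V02 : PV := ⟨{0, 2}, by decide⟩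
def V03 : PV := ⟨{0, 3}, by decide⟩
def V04 : PV := ⟨{0, 4}, by decide⟩
def V12 : PV := ⟨{1, 2}, by decide⟩
def V13 : PV := ⟨{1, 3}, by decide⟩
def V14 : PV := ⟨{1, 4}, by decide⟩
def V23 : PV := ⟨{2, 3}, by decide⟩
def V24 : PV := ⟨{2, 4}, by decide⟩
def V34 : PV := ⟨{3, 4}, by decide⟩

def E : Fin 15 → PV × PV
  | 0 => (V01, V23)
  | 1 => (V01, V24)
  | 2 => (V01, V34)
  | 3 => (V02, V13)
  | 4 => (V02, V14)
  | 5 => (V02, V34)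
  | 6 => (V03, V12)
  | 7 => (V03, V14)
  | 8 => (V03, V24)
  | 9 => (V04, V12)
  | 10 => (V04, V13)
  | 11 => (V04, V23)
  | 12 => (V12, V34)
  | 13 => (V13, V24)
  | 14 => (V14, V23)


noncomputable def cb (M : Set (Sym2 PetersenDart)) (i : Fin 15) : Bool :=
  @decide (cross M (E i).1 (E i).2) (Classical.propDecidable _)

lemma cb_iff (M : Set (Sym2 PetersenDart)) (i : Fin 15) :
    cb M i = true ↔ cross M (E i).1 (E i).2 := by
  unfold cb
  exact (@decide_eq_true_eq _ (Classical.propDecidable _)).to_iff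

noncomputable def maskOf (M : Set (Sym2 PetersenDart)) : ℕ :=
  mkN 15 (fun k => if h : k < 15 then cb M ⟨k, h⟩ else false)

lemma maskOf_lt (M : Set (Sym2 PetersenDart)) : maskOf M < 32768 := by
  have := mkN_lt 15 (fun k => if h : k < 15 then cb M ⟨k, h⟩ else false)
  norm_num at this
  exact this

lemma bit_iff (M : Set (Sym2 PetersenDart)) (k : ℕ) (h : k < 15) :
    (maskOf M).testBit k = true ↔ cross M (E ⟨k, h⟩).1 (E ⟨k, h⟩).2 := by
  rw [show (maskOf M).testBit k = cb M ⟨k, h⟩ by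
    rw [maskOf, mkN_testBit 15 _ k h, dif_pos h]]
  exact cb_iff M ⟨k, h⟩

lemma boolBeq : ∀ {a b c : Bool}, (a = true ↔ (b = true ↔ c = true)) → (a == (b == c)) = true := by
  decide

lemma beqIff {a b c : Bool} {p q r : Prop} (ha : a = true ↔ p) (hb : b = true ↔ q)
    (hc : c = true ↔ r) (h : p ↔ (q ↔ r)) : (a == (b == c)) = true :=
  boolBeq ((ha.trans h).trans (iff_congr hb hc).symm)

lemma maskOf_odd (M : Set (Sym2 PetersenDart)) (hM : IsPMSet PetersenTriangles M) :
    isOddB (maskOf M) = true := by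
  simp only [isOddB, tripleL, List.all_cons, List.all_nil, Bool.and_true, Bool.and_eq_true]
  refine ⟨?_, ?_, ?_, ?_, ?_, ?_, ?_, ?_, ?_, ?_⟩
  · have hT := triangleOdd M hM V01 V23 V24 V34 (by decide) (by decide) (by decide)
      (by decide) (by decide) (by decide) (by decide)
    exact beqIff (bit_iff M 0 (by norm_num)) (bit_iff M 1 (by norm_num)) (bit_iff M 2 (by norm_num)) hT
  · have hT := triangleOdd M hM V02 V13 V14 V34 (by decide) (by decide) (by decide)
      (by decide) (by decide) (by decide) (by decide)
    exact beqIff (bit_iff M 3 (by norm_num)) (bit_iff M 4 (by norm_num)) (bit_iff M 5 (by norm_num)) hT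
  · have hT := triangleOdd M hM V03 V12 V14 V24 (by decide) (by decide) (by decide)
      (by decide) (by decide) (by decide) (by decide)
    exact beqIff (bit_iff M 6 (by norm_num)) (bit_iff M 7 (by norm_num)) (bit_iff M 8 (by norm_num)) hT
  · have hT := triangleOdd M hM V04 V12 V13 V23 (by decide) (by decide) (by decide)
      (by decide) (by decide) (by decide) (by decide)
    exact beqIff (bit_iff M 9 (by norm_num)) (bit_iff M 10 (by norm_num)) (bit_iff M 11 (by norm_num)) hT
  · have hT := triangleOdd M hM V12 V03 V04 V34 (by decide) (by decide) (by decide)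
      (by decide) (by decide) (by decide) (by decide)
    rw [cross_symm M V12 V03, cross_symm M V12 V04] at hT
    exact beqIff (bit_iff M 6 (by norm_num)) (bit_iff M 9 (by norm_num)) (bit_iff M 12 (by norm_num)) hT
  · have hT := triangleOdd M hM V13 V02 V04 V24 (by decide) (by decide) (by decide)
      (by decide) (by decide) (by decide) (by decide)
    rw [cross_symm M V13 V02, cross_symm M V13 V04] at hT
    exact beqIff (bit_iff M 3 (by norm_num)) (bit_iff M 10 (by norm_num)) (bit_iff M 13 (by norm_num)) hT
  · have hT := triangleOdd M hM V14 V02 V03 V23 (by decide) (by decide) (by decide)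
      (by decide) (by decide) (by decide) (by decide)
    rw [cross_symm M V14 V02, cross_symm M V14 V03] at hT
    exact beqIff (bit_iff M 4 (by norm_num)) (bit_iff M 7 (by norm_num)) (bit_iff M 14 (by norm_num)) hT
  · have hT := triangleOdd M hM V23 V01 V04 V14 (by decide) (by decide) (by decide)
      (by decide) (by decide) (by decide) (by decide)
    rw [cross_symm M V23 V01, cross_symm M V23 V04, cross_symm M V23 V14] at hT
    exact beqIff (bit_iff M 0 (by norm_num)) (bit_iff M 11 (by norm_num)) (bit_iff M 14 (by norm_num)) hT
  · have hT := triangleOdd M hM V24 V01 V03 V13 (by decide) (by decide) (by decide)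
      (by decide) (by decide) (by decide) (by decide)
    rw [cross_symm M V24 V01, cross_symm M V24 V03, cross_symm M V24 V13] at hT
    exact beqIff (bit_iff M 1 (by norm_num)) (bit_iff M 8 (by norm_num)) (bit_iff M 13 (by norm_num)) hT
  · have hT := triangleOdd M hM V34 V01 V02 V12 (by decide) (by decide) (by decide)
      (by decide) (by decide) (by decide) (by decide)
    rw [cross_symm M V34 V01, cross_symm M V34 V02, cross_symm M V34 V12] at hT
    exact beqIff (bit_iff M 2 (by norm_num)) (bit_iff M 5 (by norm_num)) (bit_iff M 12 (by norm_num)) hT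

lemma cross_edge (M : Set (Sym2 PetersenDart)) (a b : PV) (h : Petersen.Adj a b)
    (hc : cross M a b) : s(da a b h, da b a h.symm) ∈ M := by
  obtain ⟨x, y, hx, hy, hm⟩ := hc
  have hx' : x = da a b h := Subtype.ext hx
  have hy' : y = da b a h.symm := Subtype.ext hy
  rwa [hx', hy'] at hm

lemma hE : ∀ i : Fin 15, Petersen.Adj (E i).1 (E i).2 := by decide


/-- The edges of `P'` corresponding to the edges of the Petersen graph form a perfect
matching `N` of `P'`, and `N` cannot be extended to an FR-triple: for any perfect
matchings `M₂, M₃` of `P'`, the intersection `N ∩ M₂ ∩ M₃` is nonempty. -/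
theorem petersen_matching_not_extendable_to_FR_triple :
    IsPMSet PetersenTriangles PetersenMatching ∧
    ∀ M₂ M₃ : Set (Sym2 PetersenDart),
      IsPMSet PetersenTriangles M₂ → IsPMSet PetersenTriangles M₃ →
      (PetersenMatching ∩ M₂ ∩ M₃).Nonempty := by
  refine ⟨partA, ?_⟩
  intro M₂ M₃ hM₂ hM₃
  have h2 := key1 (maskOf M₂) (maskOf_lt M₂) (maskOf_odd M₂ hM₂)
  have h3 := key1 (maskOf M₃) (maskOf_lt M₃) (maskOf_odd M₃ hM₃)
  have hand := key2 (maskOf M₂) h2 (maskOf M₃) h3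
  have hex : ∃ i, ((maskOf M₂) &&& (maskOf M₃)).testBit i = true := by
    by_contra hcon
    push_neg at hcon
    apply hand
    apply Nat.eq_of_testBit_eq
    intro i
    rw [Nat.zero_testBit]
    exact Bool.not_eq_true _ ▸ (hcon i)
  obtain ⟨i, hi⟩ := hex
  rw [Nat.testBit_land, Bool.and_eq_true] at hi
  have hlt : i < 15 := by
    by_contra hge
    push_neg at hge
    have : maskOf M₂ < 2 ^ i :=
      lt_of_lt_of_le (maskOf_lt M₂) (by
        calc (32768 : ℕ) = 2 ^ 15 := by norm_num
        _ ≤ 2 ^ i := Nat.pow_le_pow_right (by norm_num) hge)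
    rw [Nat.testBit_lt_two_pow this] at hi
    exact Bool.false_ne_true hi.1
  have hc2 : cross M₂ (E ⟨i, hlt⟩).1 (E ⟨i, hlt⟩).2 := (bit_iff M₂ i hlt).1 hi.1
  have hc3 : cross M₃ (E ⟨i, hlt⟩).1 (E ⟨i, hlt⟩).2 := (bit_iff M₃ i hlt).1 hi.2
  set a := (E ⟨i, hlt⟩).1
  set b := (E ⟨i, hlt⟩).2
  have hab : Petersen.Adj a b := hE ⟨i, hlt⟩
  refine ⟨s(da a b hab, da b a hab.symm), ⟨⟨?_, ?_⟩, ?_⟩⟩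
  · exact ⟨da a b hab, da b a hab.symm, rfl, rfl, rfl⟩
  · exact cross_edge M₂ a b hab hc2
  · exact cross_edge M₃ a b hab hc3
end
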